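/- Let c = (0, 0, 0, 1) ∈ ℝ⁴ and let q : ℝ³ × {0} → ℝ⁴ be the map q(x) = c + (x − c)/‖x − c‖. Then for all x, y ∈ ℝ³ × {0}, the image under q of the straight-line segment [x, y] is contained in the intersection of the unit sphere {z ∈ ℝ⁴ : ‖z − c‖ = 1} with the affine span of {x, y, c}; moreover q is injective on [x, y]. -/

import Mathlib

noncomputable section

/-- The center `c = (0, 0, 0, 1)` of the sphere, in `ℝ⁴`. -/
def sphereCenter : EuclideanSpace ℝ (Fin 4) := EuclideanSpace.single 3 1

/-- The radial projection `q(x) = c + (x − c)/‖x − c‖` toward the center `c`. -/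
def radialProj (x : EuclideanSpace ℝ (Fin 4)) : EuclideanSpace ℝ (Fin 4) :=
  sphereCenter + ‖x - sphereCenter‖⁻¹ • (x - sphereCenter)

/-!
The point `q(z)` lies on the ray from `c` through `z` at distance one from `c`, so it stays in
the unit sphere and in every affine subspace containing `z` and `c`; by convexity this applies to
the whole segment `[x, y]` and to the affine span of `{x, y, c}`. Injectivity holds because the
segment lies in the hyperplane `z₃ = 0`, which misses `c`: the last coordinate of
`q(z) - c = ‖z - c‖⁻¹ • (z - c)` is `-‖z - c‖⁻¹`, so it recovers `‖z - c‖` and then `z`.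
-/

section CentralProj

variable {E : Type*} [NormedAddCommGroup E] [NormedSpace ℝ E]

def centralProj (c p : E) : E := c + ‖p - c‖⁻¹ • (p - c)

theorem centralProj_mem_sphere {c p : E} (hp : p ≠ c) : centralProj c p ∈ Metric.sphere c 1 := by
  rw [Metric.mem_sphere, centralProj, dist_eq_norm, add_sub_cancel_left]
  exact norm_smul_inv_norm (sub_ne_zero.mpr hp)

theorem centralProj_mem_affineSubspace {s : AffineSubspace ℝ E} {c p : E} (hc : c ∈ s)
    (hp : p ∈ s) : centralProj c p ∈ s := by
  have h := s.smul_vsub_vadd_mem ‖p - c‖⁻¹ hp hc hc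
  rwa [vsub_eq_sub, vadd_eq_add, add_comm] at h

theorem centralProj_injOn_of_map_eq (f : E →ₗ[ℝ] ℝ) {c : E} {r : ℝ} (hc : f c ≠ r) :
    Set.InjOn (centralProj c) {p | f p = r} := by
  intro a ha b hb hab
  have hscaled : ‖a - c‖⁻¹ • (a - c) = ‖b - c‖⁻¹ • (b - c) := add_left_cancel hab
  have hr : r - f c ≠ 0 := sub_ne_zero.mpr hc.symm
  have hinv : ‖a - c‖⁻¹ = ‖b - c‖⁻¹ := by
    have h := congrArg f hscaled
    simp only [map_smul, map_sub, smul_eq_mul, ha.out, hb.out] at h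
    exact mul_right_cancel₀ hr h
  have hbc : b ≠ c := fun h => hc (h ▸ hb.out)
  have hb0 : ‖b - c‖⁻¹ ≠ 0 := inv_ne_zero (norm_ne_zero_iff.mpr (sub_ne_zero.mpr hbc))
  rw [hinv] at hscaled
  exact sub_left_injective (smul_right_injective E hb0 hscaled)

end CentralProj

/-- For `x, y ∈ ℝ³ × {0} ⊆ ℝ⁴`, the image under `q(z) = c + (z − c)/‖z − c‖` of the segment
`[x, y]` is contained in the intersection of the unit sphere centered at `c` with the affine
span of `{x, y, c}`; moreover `q` is injective on `[x, y]`. In other words, `q` maps segments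
of `ℝ³` to arcs of great circles of the sphere. -/
theorem radialProj_maps_segment_to_great_circle
    (x y : EuclideanSpace ℝ (Fin 4)) (hx : x 3 = 0) (hy : y 3 = 0) :
    radialProj '' segment ℝ x y ⊆
      Metric.sphere sphereCenter 1 ∩
        (affineSpan ℝ ({x, y, sphereCenter} : Set (EuclideanSpace ℝ (Fin 4))) :
          Set (EuclideanSpace ℝ (Fin 4))) ∧
    Set.InjOn radialProj (segment ℝ x y) := by
  let f := EuclideanSpace.projₗ (𝕜 := ℝ) (3 : Fin 4)
  have hfc : f sphereCenter ≠ 0 := by simp [f, sphereCenter]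
  have hseg : segment ℝ x y ⊆ {p | f p = 0} :=
    (convex_hyperplane f.isLinear 0).segment_subset hx hy
  refine ⟨?_, (centralProj_injOn_of_map_eq f hfc).mono hseg⟩
  rintro _ ⟨z, hz, rfl⟩
  set S := affineSpan ℝ ({x, y, sphereCenter} : Set (EuclideanSpace ℝ (Fin 4)))
  have mem_S : ∀ p ∈ ({x, y, sphereCenter} : Set (EuclideanSpace ℝ (Fin 4))), p ∈ S :=
    subset_affineSpan ℝ _
  have hzS : z ∈ S := S.convex.segment_subset (mem_S x (by simp)) (mem_S y (by simp)) hz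
  have hzc : z ≠ sphereCenter := fun h => hfc (h ▸ hseg hz)
  exact ⟨centralProj_mem_sphere hzc, centralProj_mem_affineSubspace (mem_S _ (by simp)) hzS⟩

end
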